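/- Let F be a finite field of characteristic 2 with trace map Tr : F → GF(2) over its prime field, let t ∈ F satisfy t·(t+1)·(t²+t+1) ≠ 0, and set t₁ = t/(t²+t+1), t₂ = (1+t)/(t²+t+1), t₃ = t·(1+t)/(t²+t+1). Let a, b, w ∈ F and suppose c := w² + w + a is nonzero. For j = 1, 2, 3 set x_j = t_j·c and h_j = b·x_j⁻² + x_j + a. Then Tr(h₁) + Tr(h₂) + Tr(h₃) = 0 in GF(2), and consequently there exists j ∈ {1,2,3} with Tr(h_j) = 0. -/

import Mathlib

/-!
Write `u₁, u₂, u₃` for the three multipliers `t / (t² + t + 1)`, `(1 + t) / (t² + t + 1)`,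
`t (1 + t) / (t² + t + 1)`. In characteristic 2 they satisfy `u₁ + u₂ + u₃ = 1` and
`u₁⁻¹ + u₂⁻¹ + u₃⁻¹ = 0`, and squaring is additive, so `h₁ + h₂ + h₃ = b (∑ xⱼ⁻¹)² + ∑ xⱼ + 3a`
collapses to `c + a = w² + w`. The trace is invariant under Frobenius, so `Tr (w² + w) = 0`.
-/

theorem Algebra.trace_pow_card_eq {K L : Type*} [Field K] [Fintype K] [Field L] [Algebra K L]
    [Algebra.IsAlgebraic K L] (x : L) :
    Algebra.trace K L (x ^ Fintype.card K) = Algebra.trace K L x :=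
  Algebra.trace_eq_of_algEquiv (FiniteField.frobeniusAlgEquivOfAlgebraic K L) x

theorem trace_sq_add_self_eq_zero {F : Type*} [Field F] [Fintype F] [Algebra (ZMod 2) F]
    (w : F) : Algebra.trace (ZMod 2) F (w ^ 2 + w) = 0 := by
  have h := Algebra.trace_pow_card_eq (K := ZMod 2) w
  rw [ZMod.card] at h
  rw [map_add, h, CharTwo.add_self_eq_zero]

section CharTwo

variable {F : Type*} [Field F] [CharP F 2]

theorem sw_multipliers_sum {t : F} (ht : t ^ 2 + t + 1 ≠ 0) :
    t / (t ^ 2 + t + 1) + (1 + t) / (t ^ 2 + t + 1) + t * (1 + t) / (t ^ 2 + t + 1) = 1 := by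
  rw [← add_div, ← add_div, div_eq_one_iff_eq ht]
  linear_combination t * CharTwo.two_eq_zero (R := F)

theorem sw_multipliers_inv_sum {t : F} (ht : t * (t + 1) * (t ^ 2 + t + 1) ≠ 0) :
    (t / (t ^ 2 + t + 1))⁻¹ + ((1 + t) / (t ^ 2 + t + 1))⁻¹
      + (t * (1 + t) / (t ^ 2 + t + 1))⁻¹ = 0 := by
  obtain ⟨⟨ht₀, ht₁⟩, ht₂⟩ := mul_ne_zero_iff.mp ht |>.imp_left mul_ne_zero_iff.mp
  have ht₁' : 1 + t ≠ 0 := by rwa [add_comm]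
  field_simp
  linear_combination (1 + 2 * t + 2 * t ^ 2 + t ^ 3) * CharTwo.two_eq_zero (R := F)

theorem sum_trace_test_args {u₁ u₂ u₃ : F} (hsum : u₁ + u₂ + u₃ = 1)
    (hinv : u₁⁻¹ + u₂⁻¹ + u₃⁻¹ = 0) (a b c : F) :
    (b * ((u₁ * c)⁻¹) ^ 2 + u₁ * c + a) + (b * ((u₂ * c)⁻¹) ^ 2 + u₂ * c + a)
      + (b * ((u₃ * c)⁻¹) ^ 2 + u₃ * c + a) = c + a := by
  have hsq : ((u₁ * c)⁻¹) ^ 2 + ((u₂ * c)⁻¹) ^ 2 + ((u₃ * c)⁻¹) ^ 2 = 0 := by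
    rw [← CharTwo.add_sq, ← CharTwo.add_sq, mul_inv, mul_inv, mul_inv, ← add_mul, ← add_mul,
      hinv, zero_mul, zero_pow two_ne_zero]
  linear_combination b * hsq + c * hsum + a * CharTwo.two_eq_zero (R := F)

end CharTwo

theorem ZMod.eq_zero_or_eq_zero_or_eq_zero_of_add_add_eq_zero {u v z : ZMod 2}
    (h : u + v + z = 0) : u = 0 ∨ v = 0 ∨ z = 0 := by
  revert u v z
  decide

theorem swchar2_trace_test_general {F : Type*} [Field F] [Fintype F] [Algebra (ZMod 2) F]
    (t a b w : F) (ht : t * (t + 1) * (t ^ 2 + t + 1) ≠ 0) :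
    let c := w ^ 2 + w + a
    let t₁ := t / (t ^ 2 + t + 1)
    let t₂ := (1 + t) / (t ^ 2 + t + 1)
    let t₃ := t * (1 + t) / (t ^ 2 + t + 1)
    let x₁ := t₁ * c
    let x₂ := t₂ * c
    let x₃ := t₃ * c
    let h₁ := b * (x₁⁻¹) ^ 2 + x₁ + a
    let h₂ := b * (x₂⁻¹) ^ 2 + x₂ + a
    let h₃ := b * (x₃⁻¹) ^ 2 + x₃ + a
    Algebra.trace (ZMod 2) F h₁ + Algebra.trace (ZMod 2) F h₂ +
        Algebra.trace (ZMod 2) F h₃ = 0 ∧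
      (Algebra.trace (ZMod 2) F h₁ = 0 ∨ Algebra.trace (ZMod 2) F h₂ = 0 ∨
        Algebra.trace (ZMod 2) F h₃ = 0) := by
  intro c t₁ t₂ t₃ x₁ x₂ x₃ h₁ h₂ h₃
  have : CharP F 2 := charP_of_injective_algebraMap (algebraMap (ZMod 2) F).injective 2
  have hsum : h₁ + h₂ + h₃ = w ^ 2 + w := by
    calc h₁ + h₂ + h₃ = c + a :=
          sum_trace_test_args (sw_multipliers_sum (right_ne_zero_of_mul ht))
            (sw_multipliers_inv_sum ht) a b c
      _ = w ^ 2 + w := by linear_combination a * CharTwo.two_eq_zero (R := F)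
  have htrace : Algebra.trace (ZMod 2) F h₁ + Algebra.trace (ZMod 2) F h₂ +
      Algebra.trace (ZMod 2) F h₃ = 0 := by
    rw [← map_add, ← map_add, hsum, trace_sq_add_self_eq_zero]
  exact ⟨htrace, ZMod.eq_zero_or_eq_zero_or_eq_zero_of_add_add_eq_zero htrace⟩

/-- Correctness of SWChar2: the three trace-test quantities have traces summing to 0
in `GF(2)`, hence at least one of them has trace 0. -/
theorem swchar2_trace_test {F : Type*} [Field F] [Fintype F] [Algebra (ZMod 2) F]
    (t a b w : F) (ht : t * (t + 1) * (t ^ 2 + t + 1) ≠ 0)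
    (hc : w ^ 2 + w + a ≠ 0) :
    let c := w ^ 2 + w + a
    let t₁ := t / (t ^ 2 + t + 1)
    let t₂ := (1 + t) / (t ^ 2 + t + 1)
    let t₃ := t * (1 + t) / (t ^ 2 + t + 1)
    let x₁ := t₁ * c
    let x₂ := t₂ * c
    let x₃ := t₃ * c
    let h₁ := b * (x₁⁻¹) ^ 2 + x₁ + a
    let h₂ := b * (x₂⁻¹) ^ 2 + x₂ + a
    let h₃ := b * (x₃⁻¹) ^ 2 + x₃ + a
    Algebra.trace (ZMod 2) F h₁ + Algebra.trace (ZMod 2) F h₂ +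
        Algebra.trace (ZMod 2) F h₃ = 0 ∧
      (Algebra.trace (ZMod 2) F h₁ = 0 ∨ Algebra.trace (ZMod 2) F h₂ = 0 ∨
        Algebra.trace (ZMod 2) F h₃ = 0) :=
  swchar2_trace_test_general t a b w ht
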